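/- Let a parity game be given, let f be a memoryless winning strategy for Player 0 from a vertex v, let π be a play from v conforming to f, and let v' = π(i) be a vertex occurring in π. Then f is a winning strategy for Player 0 from v'. -/

import Mathlib

/-- A parity game: vertices `V`, each owned by Player `0` or Player `1`,
an edge relation `E`, and a priority function `prio` with finite range. -/
structure ParityGame (V : Type*) where
  owner : V → Fin 2
  E : V → V → Prop
  prio : V → ℕ
  finRange : (Set.range prio).Finite

namespace ParityGame

variable {V : Type*} (G : ParityGame V)

/-- A dead end: a vertex without `E`-successor. -/
def DeadEnd (v : V) : Prop := ∀ w, ¬ G.E v w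

/-- `π : ℕ → V` is an infinite play (all consecutive steps are edges). -/
def InfPlay (π : ℕ → V) : Prop := ∀ i, G.E (π i) (π (i + 1))

/-- The set of priorities occurring infinitely often along an infinite play. -/
def InfOften (π : ℕ → V) : Set ℕ := {c | ∀ N, ∃ n, N ≤ n ∧ G.prio (π n) = c}

/-- An infinite play is won by Player `0` iff the maximum priority occurring
infinitely often is even (max-parity condition). -/
def WinInf (π : ℕ → V) : Prop := Even (sSup (G.InfOften π))

/-- `l` is a finite play from `v`: a nonempty list starting at `v`, with
consecutive `E`-edges, whose last vertex is a dead end. -/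
def FinPlay (v : V) (l : List V) : Prop :=
  l.head? = some v ∧ l.Chain' G.E ∧ ∀ x ∈ l.getLast?, G.DeadEnd x

/-- A finite play is won by Player `0` iff its last vertex belongs to Player `1`. -/
def WinFin (l : List V) : Prop := ∀ x ∈ l.getLast?, G.owner x = 1

/-- A strategy (for Player `0`) is valid if it assigns to every finite nonempty
`E`-path ending in a Player-`0` vertex that is not a dead end an `E`-successor
of that vertex. -/
def ValidStrat (σ : List V → V) : Prop :=
  ∀ (l : List V) (x : V), l.Chain' G.E → l.getLast? = some x →
    G.owner x = 0 → ¬ G.DeadEnd x → G.E x (σ l)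

/-- An infinite play conforms to a strategy `σ` if every step taken from a
Player-`0` vertex follows `σ` applied to the path traversed so far. -/
def ConformsInf (σ : List V → V) (π : ℕ → V) : Prop :=
  ∀ i, G.owner (π i) = 0 → π (i + 1) = σ (List.ofFn fun j : Fin (i + 1) => π j)

/-- A finite play conforms to a strategy `σ` if every step taken from a
Player-`0` vertex follows `σ` applied to the path traversed so far. -/
def ConformsFin (σ : List V → V) (l : List V) : Prop :=
  ∀ (i : ℕ) (h : i + 1 < l.length),
    G.owner (l.get ⟨i, Nat.lt_of_succ_lt h⟩) = 0 →
    l.get ⟨i + 1, h⟩ = σ (l.take (i + 1))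

/-- `σ` is a winning strategy for Player `0` from `v`: it is a valid strategy
and every (infinite or finite) play from `v` conforming to it is won by
Player `0`. -/
def WinningFrom (σ : List V → V) (v : V) : Prop :=
  G.ValidStrat σ ∧
    (∀ π : ℕ → V, π 0 = v → G.InfPlay π → G.ConformsInf σ π → G.WinInf π) ∧
    (∀ l : List V, G.FinPlay v l → G.ConformsFin σ l → G.WinFin l)

/-- Player `0` wins the game from `v` if some strategy is winning for
Player `0` from `v`. -/
def Wins0 (v : V) : Prop := ∃ σ : List V → V, G.WinningFrom σ v

/-- A strategy is memoryless if its value depends only on the last vertex of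
the path. -/
def Memoryless (σ : List V → V) : Prop :=
  ∀ (l l' : List V) (x : V), l.getLast? = some x → l'.getLast? = some x → σ l = σ l'

end ParityGame

/-!
Since `σ` is memoryless, conforming to it is a condition on each single move `x → y`.
Hence any play from `π i` conforming to `σ` can be prefixed by `π 0, …, π (i - 1)` to give
a play from `v` that still conforms to `σ`, which `σ` wins. The prefixed play has the same winner
as the original one: an infinite play keeps its tail, hence its infinitely recurring priorities,
and a finite play keeps its last vertex.
-/

namespace ParityGame

variable {V : Type*} (G : ParityGame V)

theorem Memoryless.apply_eq_apply_singleton {σ : List V → V} (hml : Memoryless σ) {l : List V}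
    {x : V} (hx : l.getLast? = some x) : σ l = σ [x] :=
  hml l [x] x hx rfl

def FollowsAt (σ : List V → V) (x y : V) : Prop := G.owner x = 0 → y = σ [x]

theorem conformsInf_iff_of_memoryless {σ : List V → V} (hml : Memoryless σ) (π : ℕ → V) :
    G.ConformsInf σ π ↔ ∀ n, G.FollowsAt σ (π n) (π (n + 1)) := by
  have hlast (n : ℕ) : (List.ofFn fun j : Fin (n + 1) => π j).getLast? = some (π n) := by
    simp [List.getLast?_eq_getElem?, -List.ofFn_succ]
  simp only [ConformsInf, FollowsAt, hml.apply_eq_apply_singleton (hlast _)]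

theorem conformsFin_iff_of_memoryless {σ : List V → V} (hml : Memoryless σ) (l : List V) :
    G.ConformsFin σ l ↔ l.IsChain (G.FollowsAt σ) := by
  have hlast (i : ℕ) (hi : i < l.length) : (l.take (i + 1)).getLast? = some l[i] := by
    simp [List.getLast?_eq_getElem?, Nat.min_eq_left hi]
  rw [List.isChain_iff_getElem]
  refine forall_congr' fun i => forall_congr' fun hi => ?_
  simp only [FollowsAt, List.get_eq_getElem, hml.apply_eq_apply_singleton (hlast i (by omega))]

def splice (π ρ : ℕ → V) (i : ℕ) (n : ℕ) : V := if n < i then π n else ρ (n - i)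

theorem splice_zero {π ρ : ℕ → V} {i : ℕ} (h : ρ 0 = π i) : splice π ρ i 0 = π 0 := by
  rcases i.eq_zero_or_pos with rfl | hi
  · simpa [splice] using h
  · simp [splice, hi]

theorem splice_add (π ρ : ℕ → V) (i n : ℕ) : splice π ρ i (n + i) = ρ n := by
  simp [splice]

theorem rel_splice_succ {R : V → V → Prop} {π ρ : ℕ → V} {i : ℕ} (h : ρ 0 = π i)
    (hπ : ∀ n < i, R (π n) (π (n + 1))) (hρ : ∀ n, R (ρ n) (ρ (n + 1))) (n : ℕ) :
    R (splice π ρ i n) (splice π ρ i (n + 1)) := by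
  rcases lt_trichotomy (n + 1) i with hn | hn | hn
  · simpa [splice, hn, (Nat.lt_succ_self n).trans hn] using hπ n (by omega)
  · simpa [splice, ← hn, h] using hπ n (by omega)
  · simpa [splice, show ¬ n < i by omega, show ¬ n + 1 < i by omega,
      show n + 1 - i = n - i + 1 by omega] using hρ (n - i)

theorem infOften_comp_add (π : ℕ → V) (i : ℕ) :
    G.InfOften (fun n => π (n + i)) = G.InfOften π := by
  ext c
  refine ⟨fun hc N => ?_, fun hc N => ?_⟩
  · obtain ⟨n, hn, rfl⟩ := hc N
    exact ⟨n + i, by omega, rfl⟩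
  · obtain ⟨n, hn, rfl⟩ := hc (N + i)
    exact ⟨n - i, by omega, by simp only [Nat.sub_add_cancel (by omega : i ≤ n)]⟩

theorem infOften_splice (π ρ : ℕ → V) (i : ℕ) : G.InfOften (splice π ρ i) = G.InfOften ρ := by
  rw [← G.infOften_comp_add (splice π ρ i) i]
  simp only [splice_add]

theorem isChain_map_range_append {R : V → V → Prop} {π : ℕ → V} {i : ℕ} {l : List V}
    (hπ : ∀ n < i, R (π n) (π (n + 1))) (hl : l.head? = some (π i)) (hR : l.IsChain R) :
    ((List.range i).map π ++ l).IsChain R := by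
  induction i generalizing l with
  | zero => simpa using hR
  | succ i ih =>
    rw [List.range_succ, List.map_append, List.append_assoc]
    refine ih (fun n hn => hπ n (by omega)) rfl ?_
    exact List.isChain_cons.mpr ⟨by simpa [hl] using hπ i (by omega), hR⟩

theorem head?_map_range_append {π : ℕ → V} {i : ℕ} {l : List V} (hl : l.head? = some (π i)) :
    ((List.range i).map π ++ l).head? = some (π 0) := by
  cases i with
  | zero => simpa using hl
  | succ i => simp [List.range_succ_eq_map]

end ParityGame

/-- If `σ` is a memoryless winning strategy for Player `0` from `v`, `π` is an
infinite play from `v` conforming to `σ`, and `v' = π i` occurs in `π`, then `σ`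
is a winning strategy for Player `0` from `v'`. -/
theorem ParityGame.winningFrom_of_memoryless_of_play {V : Type*} (G : ParityGame V)
    (σ : List V → V) (v : V) (hml : ParityGame.Memoryless σ)
    (hwin : G.WinningFrom σ v) (π : ℕ → V) (hstart : π 0 = v)
    (hplay : G.InfPlay π) (hconf : G.ConformsInf σ π) (i : ℕ) (v' : V)
    (hv' : v' = π i) : G.WinningFrom σ v' := by
  subst hv' hstart
  obtain ⟨hvalid, hinf, hfin⟩ := hwin
  rw [G.conformsInf_iff_of_memoryless hml] at hconf
  refine ⟨hvalid, fun ρ hρ0 hρplay hρconf => ?_, fun l ⟨hhead, hchain, hdead⟩ hlconf => ?_⟩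
  · rw [G.conformsInf_iff_of_memoryless hml] at hρconf
    have hwinτ := hinf (splice π ρ i) (splice_zero hρ0)
      (rel_splice_succ hρ0 (fun n _ => hplay n) hρplay)
      ((G.conformsInf_iff_of_memoryless hml _).mpr (rel_splice_succ hρ0 (fun n _ => hconf n) hρconf))
    rwa [WinInf, G.infOften_splice] at hwinτ
  · rw [G.conformsFin_iff_of_memoryless hml] at hlconf
    have hne : l ≠ [] := by rintro rfl; simp at hhead
    have hlast : ((List.range i).map π ++ l).getLast? = l.getLast? :=
      List.getLast?_append_of_ne_nil _ hne
    have hwinL := hfin ((List.range i).map π ++ l)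
      ⟨head?_map_range_append hhead, isChain_map_range_append (fun n _ => hplay n) hhead hchain,
        hlast ▸ hdead⟩
      ((G.conformsFin_iff_of_memoryless hml _).mpr
        (isChain_map_range_append (fun n _ => hconf n) hhead hlconf))
    rwa [WinFin, hlast] at hwinL
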